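/- Let m≥1, r≥0, β a weak composition with m parts, and α=(α_1,…,α_k) a strong composition whose last part is α_k=1. Let μ∈OP^all_{r;β,α} be an ordered multiset partition with all letters in {0,1,…,m}, and let c.μ be the ordered multiset partition obtained from μ by replacing every letter j in every block by j−1 modulo m+1 (so 0 becomes m and j≥1 becomes j−1). Then miniword(c.μ) equals the word obtained from miniword(μ) by applying the same letterwise replacement j ↦ j−1 mod (m+1). -/

import Mathlib

/-
Writing a block after a word that starts with `s` lists it increasingly in the cyclic order
`s + 1 < ⋯ < m < 0 < ⋯ < s`, and the rotation `c` maps this cyclic order to the one starting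
after `c s`. So, inductively from the right, `c` commutes with each block's contribution; only the
last block, written in the linear order, would break this, and it is a singleton.
-/

open scoped BigOperators

namespace omp

/-- The multiset `A(β) ∪ {0^r}`: the letter `i` (for `1 ≤ i ≤ m`) with multiplicity `β_i`,
together with `r` copies of the letter `0`. -/
def content (r : ℕ) (β : List ℕ) : Multiset ℕ :=
  Multiset.replicate r 0 +
    ∑ i ∈ Finset.range β.length, Multiset.replicate (β.getD i 0) (i + 1)

/-- `π` is an ordered multiset partition of `A(β) ∪ {0^r}` into `k` (nonempty) blocks,
with `0` allowed anywhere: the set `OP^all_{r;β,k}`. -/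
def IsOPall (r : ℕ) (β : List ℕ) (k : ℕ) (π : List (Finset ℕ)) : Prop :=
  π.length = k ∧ (∀ B ∈ π, B.Nonempty) ∧ (π.map Finset.val).sum = content r β

/-- Additionally, the last block does not contain `0`: the set `OP_{r;β,k}`. -/
def IsOP (r : ℕ) (β : List ℕ) (k : ℕ) (π : List (Finset ℕ)) : Prop :=
  IsOPall r β k π ∧ 0 ∉ π.getLastD ∅

/-- Ordered multiset partitions of `A(β) ∪ {0^r}` with shape `α`: `OP^all_{r;β,α}`. -/
def IsOPallSh (r : ℕ) (β α : List ℕ) (π : List (Finset ℕ)) : Prop :=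
  (∀ B ∈ π, B.Nonempty) ∧ (π.map Finset.val).sum = content r β ∧
    π.map Finset.card = α

/-- Shape `α` and last block avoiding `0`: `OP_{r;β,α}`. -/
def IsOPSh (r : ℕ) (β α : List ℕ) (π : List (Finset ℕ)) : Prop :=
  IsOPallSh r β α π ∧ 0 ∉ π.getLastD ∅

/-- The `i`-th block (0-indexed). -/
def blk (π : List (Finset ℕ)) (i : ℕ) : Finset ℕ := π.getD i ∅

/-- `inv`: pairs of a letter `a` in block `B_i` and the minimum `b` of a later block `B_j`
with `a > b`. -/
def inv (π : List (Finset ℕ)) : ℕ :=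
  ∑ i ∈ Finset.range π.length, ∑ j ∈ Finset.range π.length,
    if i < j then
      (@Finset.filter ℕ (fun (a : ℕ) => (blk π j).min < (a : WithBot ℕ))
        (fun _ => WithBot.decidableLT _ _) (blk π i)).card
    else 0

/-- The word `σ(π)`: each block written in decreasing order, blocks concatenated. -/
def sigmaWord (π : List (Finset ℕ)) : List ℕ :=
  (π.map (fun B => (B.sort (· ≤ ·)).reverse)).flatten

/-- The word `ind(π) = 0^{|B_1|} 1^{|B_2|} ⋯ (k-1)^{|B_k|}`. -/
def indWord (π : List (Finset ℕ)) : List ℕ :=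
  (π.zipIdx.map (fun p => List.replicate p.1.card p.2)).flatten

/-- The major index of a word (positions are 1-based). -/
def majW (w : List ℕ) : ℕ :=
  ∑ i ∈ Finset.range (w.length - 1),
    if w.getD (i + 1) 0 < w.getD i 0 then i + 1 else 0

/-- `maj(π)`: the sum of `ind(π)_{i+1}` over descents `σ_i > σ_{i+1}` of `σ(π)`. -/
def maj (π : List (Finset ℕ)) : ℕ :=
  ∑ i ∈ Finset.range ((sigmaWord π).length - 1),
    if (sigmaWord π).getD (i + 1) 0 < (sigmaWord π).getD i 0 then
      (indWord π).getD (i + 1) 0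
    else 0

/-- `dinv(π)`: primary and secondary diagonal inversions, where `B_i^h` is the `h`-th smallest
element of block `B_i` (here `h` is 0-indexed). -/
def dinv (π : List (Finset ℕ)) : ℕ :=
  ∑ i ∈ Finset.range π.length, ∑ j ∈ Finset.range π.length,
    if i < j then
      ((Finset.range (blk π i).card).filter (fun h =>
          h < (blk π j).card ∧
            ((blk π j).sort (· ≤ ·)).getD h 0 < ((blk π i).sort (· ≤ ·)).getD h 0)).card +
      ((Finset.range (blk π i).card).filter (fun h =>
          h + 1 < (blk π j).card ∧
            ((blk π j).sort (· ≤ ·)).getD (h + 1) 0 < ((blk π i).sort (· ≤ ·)).getD h 0)).card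
    else 0

/-- `miniword(π)`, built from right to left: the last block in increasing order; inductively,
if the word built so far begins with `s`, block `B_i` contributes its elements greater than `s`
in increasing order followed by its elements at most `s` in increasing order. -/
def miniword : List (Finset ℕ) → List ℕ
  | [] => []
  | B :: rest =>
    match miniword rest with
    | [] => B.sort (· ≤ ·)
    | s :: w =>
        ((B.filter (fun x => s < x)).sort (· ≤ ·) ++
          (B.filter (fun x => x ≤ s)).sort (· ≤ ·)) ++ s :: w

/-- `minimaj(π) = maj(miniword(π))`. -/
def minimaj (π : List (Finset ℕ)) : ℕ := majW (miniword π)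

/-- `D^{stat}_{r;β,k}(q) = Σ_{π ∈ OP_{r;β,k}} q^{stat(π)}` (the set is finite, so the
finite-support sum below is the intended polynomial). -/
noncomputable def D (r : ℕ) (β : List ℕ) (k : ℕ)
    (stat : List (Finset ℕ) → ℕ) : Polynomial ℕ :=
  ∑ᶠ π ∈ {π | IsOP r β k π}, Polynomial.X ^ stat π

/-- `D^{stat+}_{r;β,k}(q) = Σ_{π ∈ OP^all_{r;β,k}} q^{stat(π)}`. -/
noncomputable def Dall (r : ℕ) (β : List ℕ) (k : ℕ)
    (stat : List (Finset ℕ) → ℕ) : Polynomial ℕ :=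
  ∑ᶠ π ∈ {π | IsOPall r β k π}, Polynomial.X ^ stat π

/-- `D^{stat}_{r;β,α}(q)`, the shape-refined generating function. -/
noncomputable def DSh (r : ℕ) (β α : List ℕ)
    (stat : List (Finset ℕ) → ℕ) : Polynomial ℕ :=
  ∑ᶠ π ∈ {π | IsOPSh r β α π}, Polynomial.X ^ stat π

/-- `D^{stat+}_{r;β,α}(q)`, the shape-refined generating function with `0` allowed
in the last block. -/
noncomputable def DallSh (r : ℕ) (β α : List ℕ)
    (stat : List (Finset ℕ) → ℕ) : Polynomial ℕ :=
  ∑ᶠ π ∈ {π | IsOPallSh r β α π}, Polynomial.X ^ stat π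

end omp

namespace omp

/-- The paper's letterwise shift `c : j ↦ j - 1 (mod m + 1)`. -/
def cyclicPred (m j : ℕ) : ℕ := (j + m) % (m + 1)

/-- The position of `x` in the cyclic order `s + 1 < ⋯ < m < 0 < ⋯ < s` on `{0, …, m}`. -/
def cyclicRank (m s x : ℕ) : ℕ := if s < x then x - (s + 1) else x + m - s

/-- The contribution of a block `B` to `miniword` when the word to its right starts with `s`. -/
def blockWord (s : ℕ) (B : Finset ℕ) : List ℕ :=
  (B.filter (fun x => s < x)).sort (· ≤ ·) ++ (B.filter (fun x => x ≤ s)).sort (· ≤ ·)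

lemma cyclicPred_le (m j : ℕ) : cyclicPred m j ≤ m :=
  Nat.lt_succ_iff.mp (Nat.mod_lt _ m.succ_pos)

section cyclic

variable {m : ℕ}

lemma cyclicPred_of_le {j : ℕ} (hj : j ≤ m) : cyclicPred m j = if j = 0 then m else j - 1 := by
  unfold cyclicPred
  split_ifs with h
  · simp [h]
  · rw [show j + m = (j - 1) + (m + 1) by omega, Nat.add_mod_right, Nat.mod_eq_of_lt (by omega)]

lemma cyclicPred_injOn : Set.InjOn (cyclicPred m) (Set.Iic m) := by
  intro a ha b hb h
  rw [Set.mem_Iic] at ha hb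
  rw [cyclicPred_of_le ha, cyclicPred_of_le hb] at h
  split_ifs at h <;> omega

lemma cyclicRank_cyclicPred {s x : ℕ} (hs : s ≤ m) (hx : x ≤ m) :
    cyclicRank m (cyclicPred m s) (cyclicPred m x) = cyclicRank m s x := by
  rw [cyclicPred_of_le hs, cyclicPred_of_le hx]
  unfold cyclicRank
  split_ifs <;> omega

end cyclic

section blockWord

lemma coe_blockWord (s : ℕ) (B : Finset ℕ) : ((blockWord s B : List ℕ) : Multiset ℕ) = B.val := by
  rw [blockWord, ← Multiset.coe_add, Finset.sort_eq, Finset.sort_eq, Finset.filter_val,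
    Finset.filter_val]
  simpa only [not_lt] using Multiset.filter_add_not (fun x => s < x) B.val

lemma pairwise_cyclicRank_blockWord {m s : ℕ} {B : Finset ℕ} (hB : ∀ x ∈ B, x ≤ m) (hs : s ≤ m) :
    (blockWord s B).Pairwise (fun a b => cyclicRank m s a < cyclicRank m s b) := by
  rw [blockWord, List.pairwise_append]
  refine ⟨(Finset.sortedLT_sort _).pairwise.imp_of_mem fun {a b} ha hb _ => ?_,
    (Finset.sortedLT_sort _).pairwise.imp_of_mem fun {a b} ha hb _ => ?_, fun a ha b hb => ?_⟩
  all_goals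
    rw [Finset.mem_sort, Finset.mem_filter] at ha hb
    have := hB a ha.1
    have := hB b hb.1
    unfold cyclicRank
    split_ifs <;> omega

/-- Both sides list the same letters in increasing `cyclicRank m (cyclicPred m s)`, which
`cyclicPred m` turns into `cyclicRank m s`. -/
lemma blockWord_image_cyclicPred {m s : ℕ} {B : Finset ℕ} (hB : ∀ x ∈ B, x ≤ m) (hs : s ≤ m) :
    blockWord (cyclicPred m s) (B.image (cyclicPred m)) = (blockWord s B).map (cyclicPred m) := by
  have hB' : ∀ x ∈ B.image (cyclicPred m), x ≤ m := by
    simp only [Finset.mem_image]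
    rintro _ ⟨x, -, rfl⟩
    exact cyclicPred_le m x
  have hsorted : ((blockWord s B).map (cyclicPred m)).Pairwise
      (fun a b => cyclicRank m (cyclicPred m s) a < cyclicRank m (cyclicPred m s) b) := by
    refine List.pairwise_map.mpr ((pairwise_cyclicRank_blockWord hB hs).imp_of_mem ?_)
    intro a b ha hb hab
    rw [← Multiset.mem_coe, coe_blockWord] at ha hb
    rwa [cyclicRank_cyclicPred hs (hB a ha), cyclicRank_cyclicPred hs (hB b hb)]
  have hperm : (blockWord (cyclicPred m s) (B.image (cyclicPred m))).Perm
      ((blockWord s B).map (cyclicPred m)) := by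
    rw [← Multiset.coe_eq_coe, ← Multiset.map_coe, coe_blockWord, coe_blockWord,
      Finset.image_val_of_injOn (cyclicPred_injOn.mono hB)]
  exact hperm.eq_of_pairwise (fun _ _ _ _ h h' => absurd h' h.asymm)
    (pairwise_cyclicRank_blockWord hB' (cyclicPred_le m s)) hsorted

end blockWord

section miniword

lemma miniword_cons_of_eq_cons {B : Finset ℕ} {rest : List (Finset ℕ)} {s : ℕ} {w : List ℕ}
    (h : miniword rest = s :: w) : miniword (B :: rest) = blockWord s B ++ s :: w := by
  rw [miniword, h, blockWord]

lemma coe_miniword : ∀ μ : List (Finset ℕ), (miniword μ : Multiset ℕ) = (μ.map Finset.val).sum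
  | [] => rfl
  | B :: rest => by
    rw [List.map_cons, List.sum_cons, ← coe_miniword rest]
    rcases h : miniword rest with _ | ⟨s, w⟩
    · simp [miniword, h, Finset.sort_eq]
    · rw [miniword_cons_of_eq_cons h, ← Multiset.coe_add, coe_blockWord]

lemma miniword_ne_nil {μ : List (Finset ℕ)} {B : Finset ℕ} (hB : B ∈ μ) (hne : B.Nonempty) :
    miniword μ ≠ [] := by
  intro h
  have hsum : (μ.map Finset.val).sum = 0 := by rw [← coe_miniword, h]; rfl
  exact hne.ne_empty (Finset.val_eq_zero.mp
    (List.sum_eq_zero_iff.mp hsum _ (List.mem_map_of_mem hB)))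

/-- The last block is written in increasing order rather than cyclically, which is why it must be
a singleton. -/
theorem miniword_map_image_cyclicPred {m : ℕ} :
    ∀ {μ : List (Finset ℕ)}, (∀ x ∈ (μ.map Finset.val).sum, x ≤ m) →
      (∀ L ∈ μ.getLast?, L.card = 1) →
      miniword (μ.map (Finset.image (cyclicPred m))) = (miniword μ).map (cyclicPred m)
  | [], _, _ => rfl
  | [B], _, hlast => by
    obtain ⟨a, rfl⟩ := Finset.card_eq_one.mp (hlast B rfl)
    simp [miniword]
  | B :: C :: rest, hle, hlast => by
    have hleB : ∀ x ∈ B, x ≤ m := fun x hx =>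
      hle x (by simp only [List.map_cons, List.sum_cons]; exact Multiset.mem_add.mpr (.inl hx))
    have hleRest : ∀ x ∈ ((C :: rest).map Finset.val).sum, x ≤ m := fun x hx =>
      hle x (by rw [List.map_cons, List.sum_cons]; exact Multiset.mem_add.mpr (.inr hx))
    have hlastRest : ∀ L ∈ (C :: rest).getLast?, L.card = 1 := by
      simpa only [List.getLast?_cons_cons] using hlast
    have hL := List.getLast?_eq_some_getLast (List.cons_ne_nil C rest)
    obtain ⟨s, w, hw⟩ := List.exists_cons_of_ne_nil (miniword_ne_nil (List.getLast_mem _)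
      (Finset.card_pos.mp (by rw [hlastRest _ hL]; exact one_pos)))
    have hs : s ≤ m := hleRest s (by rw [← coe_miniword, hw]; exact List.mem_cons_self)
    have ih : miniword ((C :: rest).map (Finset.image (cyclicPred m))) =
        cyclicPred m s :: w.map (cyclicPred m) := by
      rw [miniword_map_image_cyclicPred hleRest hlastRest, hw, List.map_cons]
    rw [List.map_cons, miniword_cons_of_eq_cons ih, miniword_cons_of_eq_cons hw, List.map_append,
      List.map_cons, blockWord_image_cyclicPred hleB hs]

end miniword

lemma le_length_of_mem_content {r : ℕ} {β : List ℕ} {x : ℕ} (hx : x ∈ content r β) :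
    x ≤ β.length := by
  rcases Multiset.mem_add.mp hx with h | h
  · rw [Multiset.eq_of_mem_replicate h]
    exact Nat.zero_le _
  · obtain ⟨i, hi, hxi⟩ := Multiset.mem_sum.mp h
    rw [Multiset.eq_of_mem_replicate hxi]
    exact Finset.mem_range.mp hi

end omp

theorem miniword_cycle_shift_general (m r : ℕ) (β α : List ℕ)
    (hβ : β.length = m) (hlast : α.getLastD 0 = 1)
    (μ : List (Finset ℕ)) (hμ : omp.IsOPallSh r β α μ) :
    omp.miniword (μ.map (Finset.image (fun j => (j + m) % (m + 1)))) =
      (omp.miniword μ).map (fun j => (j + m) % (m + 1)) := by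
  obtain ⟨-, hsum, rfl⟩ := hμ
  refine omp.miniword_map_image_cyclicPred (fun x hx => ?_) (fun L hL => ?_)
  · rw [hsum] at hx
    exact hβ ▸ omp.le_length_of_mem_content hx
  · rwa [List.getLastD_eq_getLast?, List.getLast?_map, Option.mem_def.mp hL] at hlast

/-- If the last part of `α` is `1` and `μ ∈ OP^all_{r;β,α}` has letters in
`{0,…,m}`, then `miniword` commutes with the letterwise shift `j ↦ j − 1 (mod m+1)`. -/
theorem miniword_cycle_shift (m r : ℕ) (hm : 1 ≤ m) (β α : List ℕ)
    (hβ : β.length = m) (hαpos : ∀ a ∈ α, 0 < a) (hlast : α.getLastD 0 = 1)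
    (μ : List (Finset ℕ)) (hμ : omp.IsOPallSh r β α μ) :
    omp.miniword (μ.map (Finset.image (fun j => (j + m) % (m + 1)))) =
      (omp.miniword μ).map (fun j => (j + m) % (m + 1)) :=
  miniword_cycle_shift_general m r β α hβ hlast μ hμ
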